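/- arXiv:0704.0446 — 6 statements merged into one kernel-verified Lean document; each statement's English description precedes it below -/
import Mathlib

section
/- Define Θ(m_1,...,m_r) = -2 + Σ_{i=1}^r (1 - 1/m_i) and α(m) = 2/Θ(m). Suppose 2 ≤ m_1 ≤ ... ≤ m_r are integers with Θ(m) > 0, α(m) a positive integer, and each m_i divides α(m). Then the tuple (m_1,...,m_r) belongs to the explicit finite list: (2,3,7), (2,3,8), (2,4,5), (2,3,9), (2,3,10), (2,3,12), (2,4,6), (3,3,4), (2,5,5), (2,3,18), (2,4,8), (3,3,5), (2,4,12), (2,6,6), (3,3,6), (3,4,4), (2,5,10), (3,3,9), (2,8,8), (4,4,4), (3,6,6), (5,5,5), (2,2,2,3), (2,2,2,4), (2,2,2,6), (2,2,3,3), (2,2,4,4), (3,3,3,3), (2,2,2,2,2), (2,2,2,2,2,2). -/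
/-!
Write `dᵢ = α / mᵢ ∈ ℕ`. Multiplying `α Θ = 2` out gives `Σ dᵢ + 2 = (r - 2) α`, and since
every `mᵢ ≥ 2` we have `dᵢ ≤ α / 2`, which forces `3 ≤ r ≤ 6`. For sorted `mᵢ` the `dᵢ` decrease,
so reading `α = mᵢ dᵢ` against the identity bounds `m₁, m₂, …` in turn (for `r = 3`:
`m₁ ≤ 5`, `m₂ ≤ 8`, `m₃ ≤ 18`), and the finitely many remaining tuples are checked one by one.
-/

theorem mul_sum_map_one_sub_one_div {l : List ℕ} {a : ℕ} (hdvd : ∀ m ∈ l, m ∣ a) :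
    (a : ℚ) * (l.map fun m : ℕ => 1 - 1 / (m : ℚ)).sum
      = l.length * a - ((l.map (a / ·)).sum : ℕ) := by
  induction l with
  | nil => simp
  | cons m l ih =>
    rw [List.forall_mem_cons] at hdvd
    simp only [List.map_cons, List.sum_cons, List.length_cons, Nat.cast_add,
      Nat.cast_div_charZero hdvd.1, mul_add, ih hdvd.2]
    push_cast
    ring

def admissibleTupleList : List (List ℕ) :=
  [[2,3,7], [2,3,8], [2,4,5], [2,3,9], [2,3,10], [2,3,12],
   [2,4,6], [3,3,4], [2,5,5], [2,3,18], [2,4,8], [3,3,5],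
   [2,4,12], [2,6,6], [3,3,6], [3,4,4], [2,5,10], [3,3,9],
   [2,8,8], [4,4,4], [3,6,6], [5,5,5], [2,2,2,3], [2,2,2,4],
   [2,2,2,6], [2,2,3,3], [2,2,4,4], [3,3,3,3], [2,2,2,2,2],
   [2,2,2,2,2,2]]

structure IsAdmissible (a : ℕ) (l : List ℕ) : Prop where
  sorted : l.Pairwise (· ≤ ·)
  two_le : ∀ m ∈ l, 2 ≤ m
  dvd : ∀ m ∈ l, m ∣ a
  /-- `α Θ = 2`, cleared of denominators, with `dᵢ = a / mᵢ`. -/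
  sum_div_add : (l.map (a / ·)).sum + 2 + 2 * a = l.length * a

theorem isAdmissible_of_mul_eq_two {l : List ℕ} {a : ℕ} (hsort : l.Pairwise (· ≤ ·))
    (h2 : ∀ m ∈ l, 2 ≤ m) (hdvd : ∀ m ∈ l, m ∣ a)
    (hα : (a : ℚ) * (-2 + (l.map (fun m => 1 - 1 / (m : ℚ))).sum) = 2) :
    IsAdmissible a l := by
  refine ⟨hsort, h2, hdvd, ?_⟩
  -- `l.map` in `hα` runs over the monadic coercion of `l` to `List ℚ`.
  simp only [bind_pure_comp, List.map_eq_map, List.map_map, Function.comp_def] at hα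
  have := mul_sum_map_one_sub_one_div hdvd
  exact_mod_cast (by linarith : ((l.map (a / ·)).sum + 2 + 2 * a : ℚ) = l.length * a)

namespace IsAdmissible

variable {a : ℕ} {l : List ℕ}

theorem three_le_length (h : IsAdmissible a l) : 3 ≤ l.length := by
  have := h.sum_div_add
  by_contra! hl
  have := Nat.mul_le_mul_right a (show l.length ≤ 2 by omega)
  omega

theorem pos (h : IsAdmissible a l) : 0 < a :=
  Nat.pos_of_ne_zero fun ha => by simpa [ha] using h.sum_div_add

theorem mul_div_le (h : IsAdmissible a l) {m k : ℕ} (hm : m ∈ l) (hk : k ≤ m) :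
    k * (a / m) ≤ a :=
  (Nat.mul_le_mul_right _ hk).trans (Nat.mul_div_cancel' (h.dvd m hm)).le

theorem two_le_self (h : IsAdmissible a l) : 2 ≤ a := by
  obtain ⟨m, hm⟩ := List.exists_mem_of_length_pos (by linarith [h.three_le_length])
  exact (h.two_le m hm).trans (Nat.le_of_dvd h.pos (h.dvd m hm))

theorem length_le_six (h : IsAdmissible a l) : l.length ≤ 6 := by
  have hsum : 2 * (l.map (a / ·)).sum ≤ l.length * a := by
    rw [← List.sum_map_mul_left]
    simpa using List.sum_le_card_nsmul (l.map fun m => 2 * (a / m)) a (by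
      simpa using fun m hm => h.mul_div_le hm (h.two_le m hm))
  have := h.sum_div_add
  have := h.two_le_self
  by_contra! hl
  have := Nat.mul_le_mul_right a hl
  omega

theorem lt_of_lt_mul_div (h : IsAdmissible a l) {m k : ℕ} (hm : m ∈ l) (hk : a < k * (a / m)) :
    m < k :=
  Nat.lt_of_mul_lt_mul_right ((Nat.mul_div_cancel' (h.dvd m hm)).trans_lt hk)

theorem div_pos (h : IsAdmissible a l) {m : ℕ} (hm : m ∈ l) : 0 < a / m :=
  Nat.div_pos (Nat.le_of_dvd h.pos (h.dvd m hm)) (by linarith [h.two_le m hm])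

theorem div_le_div (h : IsAdmissible a l) {m m' : ℕ} (hm : m ∈ l) (hmm' : m ≤ m') :
    a / m' ≤ a / m :=
  Nat.div_le_div_left hmm' (by linarith [h.two_le m hm])

set_option maxHeartbeats 1000000 in
theorem mem_of_length_three {m₁ m₂ m₃ : ℕ} (h : IsAdmissible a [m₁, m₂, m₃]) :
    [m₁, m₂, m₃] ∈ admissibleTupleList := by
  obtain ⟨h₁₂, h₂₃⟩ : m₁ ≤ m₂ ∧ m₂ ≤ m₃ := by
    simpa [List.isChain_cons_cons] using h.sorted.isChain
  have hdvd : m₁ ∣ a ∧ m₂ ∣ a ∧ m₃ ∣ a := by simpa using h.dvd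
  have hid := h.sum_div_add
  simp only [List.map_cons, List.map_nil, List.sum_cons, List.sum_nil, List.length_cons,
    List.length_nil] at hid
  have h₁ := h.two_le m₁ (by simp)
  have d₁₂ := h.div_le_div (m := m₁) (by simp) h₁₂
  have d₂₃ := h.div_le_div (m := m₂) (by simp) h₂₃
  have d₃ := h.div_pos (m := m₃) (by simp)
  have c₁ := h.mul_div_le (m := m₁) (by simp) h₁
  have b₁ : m₁ < 6 := h.lt_of_lt_mul_div (by simp) (by omega)
  have b₂ : m₂ < 9 := h.lt_of_lt_mul_div (by simp) (by omega)
  have h₂ : 3 ≤ m₂ := by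
    -- otherwise `m₁ = m₂ = 2` and already `d₁ + d₂ = a`
    by_contra!
    obtain rfl : m₂ = 2 := by omega
    obtain rfl : m₁ = 2 := by omega
    omega
  have c₂ := h.mul_div_le (m := m₂) (by simp) h₂
  have b₃ : m₃ < 19 := h.lt_of_lt_mul_div (by simp) (by omega)
  interval_cases m₁ <;> interval_cases m₂ <;> interval_cases m₃ <;> first | decide | omega

theorem mem_of_length_four {m₁ m₂ m₃ m₄ : ℕ} (h : IsAdmissible a [m₁, m₂, m₃, m₄]) :
    [m₁, m₂, m₃, m₄] ∈ admissibleTupleList := by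
  obtain ⟨h₁₂, h₂₃, h₃₄⟩ : m₁ ≤ m₂ ∧ m₂ ≤ m₃ ∧ m₃ ≤ m₄ := by
    simpa [List.isChain_cons_cons] using h.sorted.isChain
  have hdvd : m₁ ∣ a ∧ m₂ ∣ a ∧ m₃ ∣ a ∧ m₄ ∣ a := by simpa using h.dvd
  have hid := h.sum_div_add
  simp only [List.map_cons, List.map_nil, List.sum_cons, List.sum_nil, List.length_cons,
    List.length_nil] at hid
  have h₁ := h.two_le m₁ (by simp)
  have d₁₂ := h.div_le_div (m := m₁) (by simp) h₁₂
  have d₂₃ := h.div_le_div (m := m₂) (by simp) h₂₃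
  have d₃₄ := h.div_le_div (m := m₃) (by simp) h₃₄
  have d₄ := h.div_pos (m := m₄) (by simp)
  have c₁ := h.mul_div_le (m := m₁) (by simp) h₁
  have c₂ := h.mul_div_le (m := m₂) (by simp) (h₁.trans h₁₂)
  have c₃ := h.mul_div_le (m := m₃) (by simp) (h₁.trans (h₁₂.trans h₂₃))
  have b₁ : m₁ < 4 := h.lt_of_lt_mul_div (by simp) (by omega)
  have b₂ : m₂ < 5 := h.lt_of_lt_mul_div (by simp) (by omega)
  have b₃ : m₃ < 5 := h.lt_of_lt_mul_div (by simp) (by omega)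
  have b₄ : m₄ < 7 := h.lt_of_lt_mul_div (by simp) (by omega)
  interval_cases m₁ <;> interval_cases m₂ <;> interval_cases m₃ <;> interval_cases m₄ <;>
    first | decide | omega

theorem mem_of_length_five {m₁ m₂ m₃ m₄ m₅ : ℕ} (h : IsAdmissible a [m₁, m₂, m₃, m₄, m₅]) :
    [m₁, m₂, m₃, m₄, m₅] ∈ admissibleTupleList := by
  obtain ⟨h₁₂, h₂₃, h₃₄, h₄₅⟩ : m₁ ≤ m₂ ∧ m₂ ≤ m₃ ∧ m₃ ≤ m₄ ∧ m₄ ≤ m₅ := by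
    simpa [List.isChain_cons_cons] using h.sorted.isChain
  have hid := h.sum_div_add
  simp only [List.map_cons, List.map_nil, List.sum_cons, List.sum_nil, List.length_cons,
    List.length_nil] at hid
  have h₁ := h.two_le m₁ (by simp)
  have d₁₂ := h.div_le_div (m := m₁) (by simp) h₁₂
  have d₂₃ := h.div_le_div (m := m₂) (by simp) h₂₃
  have d₃₄ := h.div_le_div (m := m₃) (by simp) h₃₄
  have d₄₅ := h.div_le_div (m := m₄) (by simp) h₄₅
  have d₅ := h.div_pos (m := m₅) (by simp)
  have c₁ := h.mul_div_le (m := m₁) (by simp) h₁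
  have b₄ : m₄ < 3 := h.lt_of_lt_mul_div (by simp) (by omega)
  obtain rfl : m₁ = 2 := by omega
  obtain rfl : m₂ = 2 := by omega
  obtain rfl : m₃ = 2 := by omega
  obtain rfl : m₄ = 2 := by omega
  have b₅ : m₅ < 5 := h.lt_of_lt_mul_div (by simp) (by omega)
  interval_cases m₅ <;> first | decide | omega

theorem mem_of_length_six {m₁ m₂ m₃ m₄ m₅ m₆ : ℕ}
    (h : IsAdmissible a [m₁, m₂, m₃, m₄, m₅, m₆]) :
    [m₁, m₂, m₃, m₄, m₅, m₆] ∈ admissibleTupleList := by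
  obtain ⟨h₁₂, h₂₃, h₃₄, h₄₅, h₅₆⟩ :
      m₁ ≤ m₂ ∧ m₂ ≤ m₃ ∧ m₃ ≤ m₄ ∧ m₄ ≤ m₅ ∧ m₅ ≤ m₆ := by
    simpa [List.isChain_cons_cons] using h.sorted.isChain
  have hid := h.sum_div_add
  simp only [List.map_cons, List.map_nil, List.sum_cons, List.sum_nil, List.length_cons,
    List.length_nil] at hid
  have h₁ := h.two_le m₁ (by simp)
  have d₁₂ := h.div_le_div (m := m₁) (by simp) h₁₂
  have d₂₃ := h.div_le_div (m := m₂) (by simp) h₂₃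
  have d₃₄ := h.div_le_div (m := m₃) (by simp) h₃₄
  have d₄₅ := h.div_le_div (m := m₄) (by simp) h₄₅
  have d₅₆ := h.div_le_div (m := m₅) (by simp) h₅₆
  have d₆ := h.div_pos (m := m₆) (by simp)
  have c₁ := h.mul_div_le (m := m₁) (by simp) h₁
  have b₆ : m₆ < 3 := h.lt_of_lt_mul_div (by simp) (by omega)
  obtain ⟨rfl, rfl, rfl, rfl, rfl, rfl⟩ :
      m₁ = 2 ∧ m₂ = 2 ∧ m₃ = 2 ∧ m₄ = 2 ∧ m₅ = 2 ∧ m₆ = 2 := by omega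
  decide

end IsAdmissible

theorem admissible_tuples_general (l : List ℕ) (hsort : l.Pairwise (· ≤ ·))
    (h2 : ∀ m ∈ l, 2 ≤ m)
    (a : ℕ)
    (hα : (a : ℚ) * (-2 + (l.map (fun m => 1 - 1 / (m : ℚ))).sum) = 2)
    (hdvd : ∀ m ∈ l, m ∣ a) :
    l ∈ ([[2,3,7], [2,3,8], [2,4,5], [2,3,9], [2,3,10], [2,3,12],
          [2,4,6], [3,3,4], [2,5,5], [2,3,18], [2,4,8], [3,3,5],
          [2,4,12], [2,6,6], [3,3,6], [3,4,4], [2,5,10], [3,3,9],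
          [2,8,8], [4,4,4], [3,6,6], [5,5,5], [2,2,2,3], [2,2,2,4],
          [2,2,2,6], [2,2,3,3], [2,2,4,4], [3,3,3,3], [2,2,2,2,2],
          [2,2,2,2,2,2]] : List (List ℕ)) := by
  have h := isAdmissible_of_mul_eq_two hsort h2 hdvd hα
  match l, h, h.three_le_length, h.length_le_six with
  | [], _, h₃, _ | [_], _, h₃, _ | [_, _], _, h₃, _ => exact absurd h₃ (by simp)
  | [_, _, _], h, _, _ => exact h.mem_of_length_three
  | [_, _, _, _], h, _, _ => exact h.mem_of_length_four
  | [_, _, _, _, _], h, _, _ => exact h.mem_of_length_five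
  | [_, _, _, _, _, _], h, _, _ => exact h.mem_of_length_six
  | _ :: _ :: _ :: _ :: _ :: _ :: _ :: _, _, _, h₆ => exact absurd h₆ (by simp)

/-- If `2 ≤ m₁ ≤ … ≤ m_r` are integers with `Θ(m) = -2 + Σ (1 - 1/mᵢ) > 0`,
`α(m) = 2/Θ(m)` a positive integer, and each `mᵢ` dividing `α(m)`, then the tuple
`(m₁,…,m_r)` belongs to the explicit list `𝒯`. -/
theorem admissible_tuples (l : List ℕ) (hsort : l.Pairwise (· ≤ ·))
    (h2 : ∀ m ∈ l, 2 ≤ m)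
    (hΘ : 0 < -2 + (l.map (fun m => 1 - 1 / (m : ℚ))).sum)
    (a : ℕ) (ha : 0 < a)
    (hα : (a : ℚ) * (-2 + (l.map (fun m => 1 - 1 / (m : ℚ))).sum) = 2)
    (hdvd : ∀ m ∈ l, m ∣ a) :
    l ∈ ([[2,3,7], [2,3,8], [2,4,5], [2,3,9], [2,3,10], [2,3,12],
          [2,4,6], [3,3,4], [2,5,5], [2,3,18], [2,4,8], [3,3,5],
          [2,4,12], [2,6,6], [3,3,6], [3,4,4], [2,5,10], [3,3,9],
          [2,8,8], [4,4,4], [3,6,6], [5,5,5], [2,2,2,3], [2,2,2,4],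
          [2,2,2,6], [2,2,3,3], [2,2,4,4], [3,3,3,3], [2,2,2,2,2],
          [2,2,2,2,2,2]] : List (List ℕ)) :=
  admissible_tuples_general l hsort h2 a hα hdvd
end

section
/- Let S = (C × C)/G be a mixed surface with p_g = q = 1, so that |G°| = (g(C)-1)²/2 and 2g(C) - 2 = |G°|·Σ_{j=1}^s (1 - 1/n_j) with all n_j ≥ 2 integers. Then (g(C), n, |G|) is one of: (5, (2,2), 16), (7, (3), 36), (9, (2), 64); in particular g(C) ∈ {5,7,9}. -/
open scoped commutatorElement

/-!
Write `m = g(C) - 1`. Since `G°` has index two, `m² = |G| = 2|G°|`, so `m` is even, and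
Riemann–Hurwitz `2m = |G°| · Σ (1 - 1/nⱼ)` becomes `m · Σ (1 - 1/nⱼ) = 4`. Every term of the
sum lies in `[1/2, 1)`, which forces `m ∈ {2, 4, 6, 8}` and then determines `s` and the `nⱼ`.
The value `m = 2` is impossible: a group of order `4 = 2²` is abelian, so conjugation by an
element outside `G°` would fix every `lⱼ`, against `(M1)`.
-/

section OneSubInv

variable {ι : Type*} [Fintype ι] {n : ι → ℕ}

lemma half_le_one_sub_inv {k : ℕ} (hk : 2 ≤ k) : (1 : ℚ) / 2 ≤ 1 - 1 / k := by
  have : (2 : ℚ) ≤ k := by exact_mod_cast hk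
  have : 1 / (k : ℚ) ≤ 1 / 2 := one_div_le_one_div_of_le two_pos this
  linarith

lemma one_sub_inv_lt_one {k : ℕ} (hk : 0 < k) : 1 - 1 / (k : ℚ) < 1 := by
  have : 0 < 1 / (k : ℚ) := by positivity
  linarith

lemma card_div_two_le_sum_one_sub_inv (hn : ∀ j, 2 ≤ n j) :
    (Fintype.card ι : ℚ) / 2 ≤ ∑ j, (1 - 1 / (n j : ℚ)) := by
  calc (Fintype.card ι : ℚ) / 2 = ∑ _j : ι, (1 : ℚ) / 2 := by simp [div_eq_mul_inv]
    _ ≤ _ := Finset.sum_le_sum fun j _ => half_le_one_sub_inv (hn j)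

lemma sum_one_sub_inv_lt_card [Nonempty ι] (hn : ∀ j, 0 < n j) :
    ∑ j, (1 - 1 / (n j : ℚ)) < Fintype.card ι := by
  calc ∑ j, (1 - 1 / (n j : ℚ)) < ∑ _j : ι, (1 : ℚ) :=
        Finset.sum_lt_sum_of_nonempty Finset.univ_nonempty fun j _ => one_sub_inv_lt_one (hn j)
    _ = Fintype.card ι := by simp

lemma eq_two_of_sum_one_sub_inv_eq_card_div_two (hn : ∀ j, 2 ≤ n j)
    (h : ∑ j, (1 - 1 / (n j : ℚ)) = Fintype.card ι / 2) (j : ι) : n j = 2 := by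
  have hconst : ∑ _j : ι, (1 : ℚ) / 2 = ∑ j, (1 - 1 / (n j : ℚ)) := by
    rw [h]; simp [div_eq_mul_inv]
  have hj := (Finset.sum_eq_sum_iff_of_le fun j _ => half_le_one_sub_inv (hn j)).mp hconst j
    (Finset.mem_univ j)
  have : (n j : ℚ) = 2 := by
    have : (n j : ℚ) ≠ 0 := by have := hn j; positivity
    field_simp at hj
    linarith
  exact_mod_cast this

end OneSubInv

lemma mul_sum_one_sub_inv_eq_four_cases {s m : ℕ} {n : Fin s → ℕ} (hs : 1 ≤ s)
    (hn : ∀ j, 2 ≤ n j) (hm : Even m) (hm2 : m ≠ 2)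
    (h : (m : ℚ) * ∑ j, (1 - 1 / (n j : ℚ)) = 4) :
    (m = 4 ∧ s = 2 ∧ ∀ j, n j = 2) ∨ (m = 6 ∧ s = 1 ∧ ∀ j, n j = 3) ∨
      (m = 8 ∧ s = 1 ∧ ∀ j, n j = 2) := by
  have : Nonempty (Fin s) := ⟨⟨0, hs⟩⟩
  have hlo := card_div_two_le_sum_one_sub_inv hn
  have hhi := sum_one_sub_inv_lt_card fun j => (hn j).trans_lt' two_pos
  rw [Fintype.card_fin] at hlo hhi
  set S := ∑ j, (1 - 1 / (n j : ℚ)) with hS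
  have hs' : (1 : ℚ) ≤ s := by exact_mod_cast hs
  have hm8 : (m : ℚ) ≤ 8 := by nlinarith
  obtain ⟨k, rfl⟩ := hm
  have hk : k ≤ 4 := by push_cast at hm8; exact_mod_cast (by linarith : (k : ℚ) ≤ 4)
  interval_cases k
  · norm_num at h
  · exact absurd rfl hm2
  · have hS1 : S = 1 := by norm_num at h; linarith
    have hs2 : s = 2 := by
      have : s ≤ 2 := by exact_mod_cast (by linarith : (s : ℚ) ≤ 2)
      have : 1 < s := by exact_mod_cast (by linarith : (1 : ℚ) < s)
      omega
    subst hs2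
    refine Or.inl ⟨rfl, rfl, eq_two_of_sum_one_sub_inv_eq_card_div_two hn ?_⟩
    rw [← hS, hS1]; norm_num
  · have hS23 : S = 2 / 3 := by norm_num at h; linarith
    have hs1 : s = 1 := by
      have : s < 2 := by exact_mod_cast (by linarith : (s : ℚ) < 2)
      omega
    subst hs1
    refine Or.inr (Or.inl ⟨rfl, rfl, fun j => ?_⟩)
    rw [hS, Fin.sum_univ_one] at hS23
    have : (n 0 : ℚ) = 3 := by
      have : (n 0 : ℚ) ≠ 0 := by have := hn 0; positivity
      field_simp at hS23
      linarith
    rw [Subsingleton.elim j 0]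
    exact_mod_cast this
  · have hS12 : S = 1 / 2 := by norm_num at h; linarith
    have hs1 : s = 1 := by
      have : s < 2 := by exact_mod_cast (by linarith : (s : ℚ) < 2)
      omega
    subst hs1
    refine Or.inr (Or.inr ⟨rfl, rfl, eq_two_of_sum_one_sub_inv_eq_card_div_two hn ?_⟩)
    rw [← hS, hS12]; norm_num

lemma Subgroup.card_ne_prime_sq_of_forall_conj_ne {G : Type*} [Group G] {H : Subgroup G}
    (hH : H ≠ ⊤) {x : G} (hx : ∀ g ∉ H, x ≠ g * x * g⁻¹) (p : ℕ) [Fact p.Prime] :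
    Nat.card G ≠ p ^ 2 := by
  intro hG
  obtain ⟨g, -, hg⟩ := SetLike.exists_of_lt hH.lt_top
  have hxg : x * g = g * x := (IsPGroup.isMulCommutative_of_card_eq_prime_sq hG).is_comm.comm x g
  exact hx g hg (by rw [← hxg, mul_inv_cancel_right])

lemma sub_one_mul_sum_eq_four {gC N : ℕ} {S : ℚ} (hN : 0 < N) (hsq : (gC - 1) ^ 2 = 2 * N)
    (hRH : 2 * (gC : ℚ) - 2 = N * S) : ((gC - 1 : ℕ) : ℚ) * S = 4 := by
  have hm : 0 < gC - 1 := Nat.pos_of_ne_zero fun h => by simp [h] at hsq; omega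
  have hgC : 1 ≤ gC := by omega
  have hmQ : (0 : ℚ) < (gC - 1 : ℕ) := by exact_mod_cast hm
  have hsqQ : ((gC - 1 : ℕ) : ℚ) ^ 2 = 2 * N := by exact_mod_cast hsq
  push_cast [hgC] at hmQ hsqQ ⊢
  refine mul_left_cancel₀ hmQ.ne' ?_
  linear_combination S * hsqQ - 2 * hRH

theorem mixed_classification_general {G : Type*} [Group G] [Finite G]
    (G₀ : Subgroup G) (hidx : G₀.index = 2)
    (gC : ℕ) (hcard : Nat.card G = (gC - 1) ^ 2)
    (s : ℕ) (hs : 1 ≤ s) (n : Fin s → ℕ) (hn : ∀ j, 2 ≤ n j)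
    (l : Fin s → G)
    (hRH : 2 * (gC : ℚ) - 2 = (Nat.card G₀ : ℚ) * ∑ j, (1 - 1 / (n j : ℚ)))
    (hM1 : ∀ g : G, g ∉ G₀ → ∀ i j, l i ≠ g * l j * g⁻¹) :
    (gC = 5 ∧ s = 2 ∧ (∀ j, n j = 2) ∧ Nat.card G = 16) ∨
    (gC = 7 ∧ s = 1 ∧ (∀ j, n j = 3) ∧ Nat.card G = 36) ∨
    (gC = 9 ∧ s = 1 ∧ (∀ j, n j = 2) ∧ Nat.card G = 64) := by
  have hsq : (gC - 1) ^ 2 = 2 * Nat.card G₀ := by rw [← hcard, ← G₀.index_mul_card, hidx]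
  have heven : Even (gC - 1) := (Nat.even_pow' two_ne_zero).mp ⟨_, hsq.trans (two_mul _)⟩
  have hne : gC - 1 ≠ 2 := by
    have hG₀ : G₀ ≠ ⊤ := fun h => by simp [h] at hidx
    intro h
    exact G₀.card_ne_prime_sq_of_forall_conj_ne hG₀ (fun g hg => hM1 g hg ⟨0, hs⟩ ⟨0, hs⟩) 2
      (by rw [hcard, h])
  rcases mul_sum_one_sub_inv_eq_four_cases hs hn heven hne
      (sub_one_mul_sum_eq_four Nat.card_pos hsq hRH) with
    ⟨hm, rfl, hn⟩ | ⟨hm, rfl, hn⟩ | ⟨hm, rfl, hn⟩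
  · exact Or.inl ⟨by omega, rfl, hn, by rw [hcard, hm]; norm_num⟩
  · exact Or.inr (Or.inl ⟨by omega, rfl, hn, by rw [hcard, hm]; norm_num⟩)
  · exact Or.inr (Or.inr ⟨by omega, rfl, hn, by rw [hcard, hm]; norm_num⟩)

/-- For a mixed surface `S = (C × C)/G` with `p_g = q = 1` (so `|G| = (g(C)-1)²`,
`G°` of index 2 with a generating vector of type `(1 | n₁,…,n_s)` satisfying the
Riemann–Hurwitz relation and the freeness conditions `(M1)`, `(M2)`), the data
`(g(C), n, |G|)` is one of `(5, (2,2), 16)`, `(7, (3), 36)`, `(9, (2), 64)`. -/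
theorem mixed_classification {G : Type*} [Group G] [Finite G]
    (G₀ : Subgroup G) (hidx : G₀.index = 2)
    (gC : ℕ) (hcard : Nat.card G = (gC - 1) ^ 2)
    (s : ℕ) (hs : 1 ≤ s) (n : Fin s → ℕ) (hn : ∀ j, 2 ≤ n j)
    (l : Fin s → G) (h₁ h₂ : G)
    (hl : ∀ j, l j ∈ G₀) (hh₁ : h₁ ∈ G₀) (hh₂ : h₂ ∈ G₀)
    (hord : ∀ j, orderOf (l j) = n j)
    (hrel : (List.ofFn l).prod * ⁅h₁, h₂⁆ = 1)
    (hgen : Subgroup.closure ({h₁, h₂} ∪ Set.range l) = G₀)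
    (hRH : 2 * (gC : ℚ) - 2 = (Nat.card G₀ : ℚ) * ∑ j, (1 - 1 / (n j : ℚ)))
    (hM1 : ∀ g : G, g ∉ G₀ → ∀ i j, l i ≠ g * l j * g⁻¹)
    (hM2 : ∀ g : G, g ∉ G₀ → ∀ j, ∀ σ ∈ G₀, g ^ 2 ∉ Subgroup.zpowers (σ * l j * σ⁻¹)) :
    (gC = 5 ∧ s = 2 ∧ (∀ j, n j = 2) ∧ Nat.card G = 16) ∨
    (gC = 7 ∧ s = 1 ∧ (∀ j, n j = 3) ∧ Nat.card G = 36) ∨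
    (gC = 9 ∧ s = 1 ∧ (∀ j, n j = 2) ∧ Nat.card G = 64) :=
  mixed_classification_general G₀ hidx gC hcard s hs n hn l hRH hM1
end

section
/- Each of the groups Z_2 × Z_4, (Z_2)^3, and D_4 admits a generating vector of type (1 | 2, 2). -/
/-!
In an abelian group the commutator `⁅h₁, h₂⁆` is trivial, so it suffices to take `l₁ = l₂ = l` for
an involution `l` such that `l, h₁, h₂` generate. In the dihedral group `D_n` the commutator
`⁅r 1, sr 0⁆ = r 2` is cancelled by the product of reflections `sr 2 * sr 0 = r (-2)`, and
`r 1, sr 0` generate.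
-/

open scoped commutatorElement

open Multiplicative DihedralGroup

section GeneratingVector

variable {G : Type*} [Group G]

/-- `(l₁, l₂, h₁, h₂)` is a generating vector of type `(1 | 2, 2)`. -/
def IsGeneratingVector (l₁ l₂ h₁ h₂ : G) : Prop :=
  orderOf l₁ = 2 ∧ orderOf l₂ = 2 ∧ l₁ * l₂ * ⁅h₁, h₂⁆ = 1 ∧
    Subgroup.closure {l₁, l₂, h₁, h₂} = ⊤

theorem isGeneratingVector_of_commute {l h₁ h₂ : G} (hl : orderOf l = 2) (hh : Commute h₁ h₂)
    (hgen : Subgroup.closure {l, h₁, h₂} = ⊤) : IsGeneratingVector l l h₁ h₂ := by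
  refine ⟨hl, hl, ?_, by rwa [Set.insert_idem]⟩
  rw [commutatorElement_eq_one_iff_commute.mpr hh, mul_one, ← sq, ← hl, pow_orderOf_eq_one]

end GeneratingVector

theorem ZMod.addSubgroup_closure_one_eq_top (n : ℕ) :
    AddSubgroup.closure {(1 : ZMod n)} = ⊤ :=
  (AddSubgroup.eq_top_iff' _).mpr fun x =>
    AddSubgroup.mem_closure_singleton.mpr ⟨x.cast, by rw [zsmul_one, ZMod.intCast_zmod_cast]⟩

theorem AddSubgroup.closure_image_inl_union_image_inr_eq_top {A B : Type*} [AddGroup A]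
    [AddGroup B] {s : Set A} {t : Set B} (hs : closure s = ⊤) (ht : closure t = ⊤) :
    closure (AddMonoidHom.inl A B '' s ∪ AddMonoidHom.inr A B '' t) = ⊤ := by
  rw [closure_union, ← AddMonoidHom.map_closure, ← AddMonoidHom.map_closure, hs, ht, eq_top_iff']
  intro x
  rw [← Prod.fst_add_snd x]
  exact add_mem (mem_sup_left ⟨x.1, trivial, rfl⟩) (mem_sup_right ⟨x.2, trivial, rfl⟩)

theorem Subgroup.closure_image_ofAdd_eq_top {A : Type*} [AddGroup A] {S : Set A}
    (hS : AddSubgroup.closure S = ⊤) : Subgroup.closure (ofAdd '' S) = ⊤ := by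
  rw [Equiv.image_eq_preimage_symm, ofAdd_symm_eq, ← AddSubgroup.toSubgroup_closure, hS,
    map_top]

theorem exists_isGeneratingVector_zmod_two_prod_zmod_four :
    ∃ l₁ l₂ h₁ h₂ : Multiplicative (ZMod 2 × ZMod 4), IsGeneratingVector l₁ l₂ h₁ h₂ := by
  refine ⟨_, _, _, _, isGeneratingVector_of_commute (l := ofAdd (1, 2)) (h₁ := ofAdd (1, 0))
    (h₂ := ofAdd (0, 1)) (orderOf_eq_prime (by decide) (by decide)) (Commute.all _ _) ?_⟩
  refine top_unique ((Subgroup.closure_image_ofAdd_eq_top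
    (AddSubgroup.closure_image_inl_union_image_inr_eq_top
      (ZMod.addSubgroup_closure_one_eq_top 2) (ZMod.addSubgroup_closure_one_eq_top 4))).ge.trans
    (Subgroup.closure_mono ?_))
  rintro _ ⟨_, ⟨_, rfl, rfl⟩ | ⟨_, rfl, rfl⟩, rfl⟩ <;> simp

theorem exists_isGeneratingVector_zmod_two_cube :
    ∃ l₁ l₂ h₁ h₂ : Multiplicative (ZMod 2 × ZMod 2 × ZMod 2), IsGeneratingVector l₁ l₂ h₁ h₂ := by
  refine ⟨_, _, _, _, isGeneratingVector_of_commute (l := ofAdd (1, 0, 0))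
    (h₁ := ofAdd (0, 1, 0)) (h₂ := ofAdd (0, 0, 1)) (orderOf_eq_prime (by decide) (by decide))
    (Commute.all _ _) ?_⟩
  have one := ZMod.addSubgroup_closure_one_eq_top 2
  refine top_unique ((Subgroup.closure_image_ofAdd_eq_top
    (AddSubgroup.closure_image_inl_union_image_inr_eq_top one
      (AddSubgroup.closure_image_inl_union_image_inr_eq_top one one))).ge.trans
    (Subgroup.closure_mono ?_))
  rintro _ ⟨_, ⟨_, rfl, rfl⟩ | ⟨_, ⟨_, rfl, rfl⟩ | ⟨_, rfl, rfl⟩, rfl⟩, rfl⟩ <;>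
    simp [Prod.zero_eq_mk]

theorem DihedralGroup.closure_r_one_sr_zero (n : ℕ) :
    Subgroup.closure {r 1, sr 0} = (⊤ : Subgroup (DihedralGroup n)) := by
  have hr : r 1 ∈ Subgroup.closure {(r 1 : DihedralGroup n), sr 0} :=
    Subgroup.subset_closure (by simp)
  have hs : sr 0 ∈ Subgroup.closure {(r 1 : DihedralGroup n), sr 0} :=
    Subgroup.subset_closure (by simp)
  rw [Subgroup.eq_top_iff']
  rintro (i | i)
  · simpa [r_one_zpow] using zpow_mem hr i.cast
  · simpa [r_one_zpow] using mul_mem hs (zpow_mem hr i.cast)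

theorem DihedralGroup.isGeneratingVector (n : ℕ) :
    IsGeneratingVector (sr 2 : DihedralGroup n) (sr 0) (r 1) (sr 0) := by
  refine ⟨orderOf_sr 2, orderOf_sr 0, ?_, ?_⟩
  · simp [commutatorElement_def, one_add_one_eq_two]
  · refine top_unique ((closure_r_one_sr_zero n).ge.trans (Subgroup.closure_mono ?_))
    simp

/-- Each of `Z_2 × Z_4`, `(Z_2)³` and `D_4` admits a generating vector of type `(1 | 2, 2)`. -/
theorem generating_vector_type_1_2_2 :
    (∃ l₁ l₂ h₁ h₂ : Multiplicative (ZMod 2 × ZMod 4),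
      orderOf l₁ = 2 ∧ orderOf l₂ = 2 ∧ l₁ * l₂ * ⁅h₁, h₂⁆ = 1 ∧
      Subgroup.closure {l₁, l₂, h₁, h₂} = ⊤) ∧
    (∃ l₁ l₂ h₁ h₂ : Multiplicative (ZMod 2 × ZMod 2 × ZMod 2),
      orderOf l₁ = 2 ∧ orderOf l₂ = 2 ∧ l₁ * l₂ * ⁅h₁, h₂⁆ = 1 ∧
      Subgroup.closure {l₁, l₂, h₁, h₂} = ⊤) ∧
    (∃ l₁ l₂ h₁ h₂ : DihedralGroup 4,
      orderOf l₁ = 2 ∧ orderOf l₂ = 2 ∧ l₁ * l₂ * ⁅h₁, h₂⁆ = 1 ∧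
      Subgroup.closure {l₁, l₂, h₁, h₂} = ⊤) :=
  ⟨exists_isGeneratingVector_zmod_two_prod_zmod_four, exists_isGeneratingVector_zmod_two_cube,
    ⟨_, _, _, _, DihedralGroup.isGeneratingVector 4⟩⟩
end

section
/- In the group G = D_{2,8,3} = ⟨x, y | x² = y⁸ = 1, x y x⁻¹ = y³⟩ of order 16, the subgroup G° = ⟨x, y²⟩ is isomorphic to the dihedral group D_4 of order 8, and: (i) the centralizer of x in G is ⟨x, y⁴⟩, which is contained in G°; (ii) for every g ∈ G \ G°, g² ∈ ⟨y⟩ and g² is not conjugate in G° to x. -/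
/-!
The proof identifies `G` with an explicit model. On `ZMod 8 × ZMod 2` put the multiplication
`(i, s) * (j, t) = (i + 3 ^ s * j, s + t)`, the semidirect product in which `a = (0, 1)` acts on
`b = (1, 0)` by cubing. The relations make `(i, s) ↦ y ^ i * x ^ s` a homomorphism onto `G`,
hence an isomorphism since both groups have order `16`. The claims about `G` are thereby
transported to statements about the sixteen elements of the model, checked by evaluation.
-/

theorem Subgroup.closure_pair_eq_of_forall_eq_pow_mul_pow {H : Type*} [Group H]
    {K : Subgroup H} {u v : H} (hu : u ∈ K) (hv : v ∈ K)
    (hK : ∀ m ∈ K, ∃ i j : ℕ, m = u ^ i * v ^ j) :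
    Subgroup.closure {u, v} = K := by
  refine le_antisymm ((Subgroup.closure_le K).mpr (Set.insert_subset_iff.mpr ⟨hu, by simpa⟩))
    fun m hm => ?_
  obtain ⟨i, j, rfl⟩ := hK m hm
  exact mul_mem (pow_mem (Subgroup.subset_closure (by simp)) i)
    (pow_mem (Subgroup.subset_closure (by simp)) j)

theorem Subgroup.map_centralizer_singleton_of_bijective {H G : Type*} [Group H] [Group G]
    {f : H →* G} (hf : Function.Bijective f) (g : H) :
    (Subgroup.centralizer {g}).map f = Subgroup.centralizer {f g} := by
  ext z
  obtain ⟨w, rfl⟩ := hf.2 z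
  rw [Subgroup.mem_map_iff_mem hf.1, Subgroup.mem_centralizer_singleton_iff,
    Subgroup.mem_centralizer_singleton_iff, ← map_mul, ← map_mul, hf.1.eq_iff]

theorem pow_zmod_val_natCast {M : Type*} [Monoid M] {x : M} {n : ℕ} [NeZero n]
    (hx : x ^ n = 1) (k : ℕ) : x ^ (k : ZMod n).val = x ^ k :=
  pow_eq_pow_of_modEq (by rw [ZMod.val_natCast]; exact Nat.mod_modEq k n) hx

theorem pow_mul_pow_eq_of_conj {G : Type*} [Group G] {x y : G} {k : ℕ}
    (h : x * y * x⁻¹ = y ^ k) (s m : ℕ) : x ^ s * y ^ m = y ^ (k ^ s * m) * x ^ s := by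
  rw [← mul_inv_eq_iff_eq_mul]
  induction s generalizing m with
  | zero => simp
  | succ s ih =>
    calc x ^ (s + 1) * y ^ m * (x ^ (s + 1))⁻¹ = x ^ s * (x * y * x⁻¹) ^ m * (x ^ s)⁻¹ := by
          rw [conj_pow]; group
      _ = y ^ (k ^ (s + 1) * m) := by
          rw [h, ← pow_mul, ih, pow_succ, mul_assoc]

def D283 : Type := ZMod 8 × ZMod 2

namespace D283

instance : Fintype D283 := inferInstanceAs (Fintype (ZMod 8 × ZMod 2))
instance : DecidableEq D283 := inferInstanceAs (DecidableEq (ZMod 8 × ZMod 2))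

instance : Group D283 where
  mul p q := (p.1 + 3 ^ p.2.val * q.1, p.2 + q.2)
  one := (0, 0)
  inv p := (-(3 ^ p.2.val * p.1), -p.2)
  mul_assoc := by decide
  one_mul := by decide
  mul_one := by decide
  inv_mul_cancel := by decide

def a : D283 := (0, 1)
def b : D283 := (1, 0)

def dihedralHom : DihedralGroup 4 →* D283 where
  toFun
    | .r i => b ^ (2 * i.val)
    | .sr i => a * b ^ (2 * i.val)
  map_one' := by decide
  map_mul' := by decide

theorem dihedralHom_injective : Function.Injective dihedralHom := by
  decide

theorem closure_a_b_sq : Subgroup.closure {a, b ^ 2} = dihedralHom.range := by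
  refine Subgroup.closure_pair_eq_of_forall_eq_pow_mul_pow
    ⟨.sr 0, by decide⟩ ⟨.r 1, by decide⟩ ?_
  rintro _ ⟨d, rfl⟩
  obtain ⟨i, -, j, -, h⟩ :=
    (by decide : ∀ d, ∃ i < 2, ∃ j < 4, dihedralHom d = a ^ i * (b ^ 2) ^ j) d
  exact ⟨i, j, h⟩

theorem closure_a_b_pow_four : Subgroup.closure {a, b ^ 4} = Subgroup.centralizer {a} := by
  refine Subgroup.closure_pair_eq_of_forall_eq_pow_mul_pow
    (Subgroup.mem_centralizer_singleton_iff.mpr rfl)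
    (Subgroup.mem_centralizer_singleton_iff.mpr (by decide)) fun m hm => ?_
  obtain ⟨i, -, j, -, h⟩ := (by decide : ∀ m : D283, m * a = a * m →
    ∃ i < 2, ∃ j < 2, m = a ^ i * (b ^ 4) ^ j) m (Subgroup.mem_centralizer_singleton_iff.mp hm)
  exact ⟨i, j, h⟩

theorem sq_mem_zpowers_b (m : D283) : m ^ 2 ∈ Subgroup.zpowers b := by
  obtain ⟨i, -, h⟩ := (by decide : ∀ m : D283, ∃ i < 8, m ^ 2 = b ^ i) m
  exact h ▸ Subgroup.npow_mem_zpowers b i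

-- Squares have second coordinate `0`, conjugates of `a` have second coordinate `1`.
theorem sq_ne_conj_a : ∀ m τ : D283, m ^ 2 ≠ τ * a * τ⁻¹ := by
  decide

variable {G : Type*} [Group G] {x y : G}

def lift (hx : x ^ 2 = 1) (hy : y ^ 8 = 1) (hconj : x * y * x⁻¹ = y ^ 3) : D283 →* G where
  toFun p := y ^ p.1.val * x ^ p.2.val
  map_one' := by
    show y ^ 0 * x ^ 0 = 1
    simp
  map_mul' p q := by
    show y ^ (p.1 + 3 ^ p.2.val * q.1).val * x ^ (p.2 + q.2).val = _
    have h8 : p.1 + 3 ^ p.2.val * q.1 = ((p.1.val + 3 ^ p.2.val * q.1.val : ℕ) : ZMod 8) := by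
      simp
    have h2 : p.2 + q.2 = ((p.2.val + q.2.val : ℕ) : ZMod 2) := by simp
    rw [h8, h2, pow_zmod_val_natCast hy, pow_zmod_val_natCast hx, pow_add, pow_add,
      mul_assoc (y ^ _) (x ^ _), ← mul_assoc (x ^ _) (y ^ _), pow_mul_pow_eq_of_conj hconj]
    group

section lift

variable (hx : x ^ 2 = 1) (hy : y ^ 8 = 1) (hconj : x * y * x⁻¹ = y ^ 3)

theorem lift_a : lift hx hy hconj a = x := by
  show y ^ 0 * x ^ 1 = x
  simp

theorem lift_b : lift hx hy hconj b = y := by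
  show y ^ 1 * x ^ 0 = y
  simp

theorem lift_bijective (hG : Nat.card G = 16) (hgen : Subgroup.closure {x, y} = ⊤) :
    Function.Bijective (lift hx hy hconj) := by
  have hsurj : Function.Surjective (lift hx hy hconj) := by
    rw [← MonoidHom.range_eq_top, eq_top_iff, ← hgen, Subgroup.closure_le,
      Set.insert_subset_iff, Set.singleton_subset_iff]
    exact ⟨⟨a, lift_a hx hy hconj⟩, ⟨b, lift_b hx hy hconj⟩⟩
  refine (Nat.bijective_iff_surjective_and_card _).mpr ⟨hsurj, ?_⟩
  rw [hG, Nat.card_eq_fintype_card]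
  rfl

end lift

end D283

/-- In `G = D_{2,8,3} = ⟨x, y | x² = y⁸ = 1, xyx⁻¹ = y³⟩` of order 16, the subgroup
`G° = ⟨x, y²⟩` is isomorphic to `D₄`; the centralizer of `x` is `⟨x, y⁴⟩ ⊆ G°`; and
every `g ∉ G°` satisfies `g² ∈ ⟨y⟩` and `g²` is not conjugate in `G°` to `x`. -/
theorem D283_mixed_conditions {G : Type*} [Group G] (hG : Nat.card G = 16)
    (x y : G) (hx : x ^ 2 = 1) (hy : y ^ 8 = 1) (hconj : x * y * x⁻¹ = y ^ 3)
    (hgen : Subgroup.closure {x, y} = ⊤) :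
    Nonempty (↥(Subgroup.closure {x, y ^ 2}) ≃* DihedralGroup 4) ∧
    Subgroup.centralizer {x} = Subgroup.closure {x, y ^ 4} ∧
    Subgroup.closure {x, y ^ 4} ≤ Subgroup.closure {x, y ^ 2} ∧
    (∀ g : G, g ∉ Subgroup.closure {x, y ^ 2} →
      g ^ 2 ∈ Subgroup.zpowers y ∧
      ∀ σ ∈ Subgroup.closure {x, y ^ 2}, g ^ 2 ≠ σ * x * σ⁻¹) := by
  set f := D283.lift hx hy hconj
  have hf : Function.Bijective f := D283.lift_bijective hx hy hconj hG hgen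
  have hfa : f D283.a = x := D283.lift_a hx hy hconj
  have hfb : f D283.b = y := D283.lift_b hx hy hconj
  have map_closure (n : ℕ) : (Subgroup.closure {D283.a, D283.b ^ n}).map f =
      Subgroup.closure {x, y ^ n} := by
    rw [MonoidHom.map_closure, Set.image_pair, map_pow, hfa, hfb]
  refine ⟨?_, ?_, ?_, fun g _ => ?_⟩
  · rw [← map_closure, D283.closure_a_b_sq, ← MonoidHom.range_comp]
    exact ⟨(MonoidHom.ofInjective (f := f.comp D283.dihedralHom)
      (hf.1.comp D283.dihedralHom_injective)).symm⟩
  · rw [← map_closure, D283.closure_a_b_pow_four, ← hfa,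
      Subgroup.map_centralizer_singleton_of_bijective hf]
  · rw [Subgroup.closure_le, Set.insert_subset_iff]
    refine ⟨Subgroup.subset_closure (by simp), ?_⟩
    simpa [← pow_mul] using pow_mem (Subgroup.subset_closure (by simp) :
      y ^ 2 ∈ Subgroup.closure {x, y ^ 2}) 2
  obtain ⟨m, rfl⟩ := hf.2 g
  refine ⟨?_, fun σ _ => ?_⟩
  · rw [← hfb, ← MonoidHom.map_zpowers, ← map_pow]
    exact Subgroup.mem_map_of_mem f (D283.sq_mem_zpowers_b m)
  · obtain ⟨τ, rfl⟩ := hf.2 σ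
    rw [← hfa, ← map_pow, ← map_inv, ← map_mul, ← map_mul, hf.1.ne_iff]
    exact D283.sq_ne_conj_a m τ
end

section
/- The group Z_3 × S_3 admits a generating vector of type (1 | 3): there exist elements l, h_1, h_2 ∈ Z_3 × S_3 with l of order 3, l·[h_1, h_2] = 1, and ⟨l, h_1, h_2⟩ = Z_3 × S_3. -/
/-!
Take `h₁ = (g, τ)` and `h₂ = (1, c)` with `g` a generator of `Z₃`, `τ` a transposition and `c` a
3-cycle. Since `τ` inverts `c`, `⁅h₁, h₂⁆ = (1, c⁻²) = (1, c)`, so `l = (1, c⁻¹)` has order 3.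
As the orders of `g` and `τ` are coprime, `h₁ ^ 4 = (g, 1)` and `h₁ ^ 3 = (1, τ)`; these and
`(1, c)` generate `Z₃` and `S₃` in the two factors.
-/

open scoped commutatorElement

open Equiv

theorem Subgroup.eq_top_of_inl_inr_mem {G N : Type*} [Group G] [Group N] {K : Subgroup (G × N)}
    {s : Set G} {t : Set N} (hs : closure s = ⊤) (ht : closure t = ⊤)
    (hsK : ∀ a ∈ s, (a, (1 : N)) ∈ K) (htK : ∀ b ∈ t, ((1 : G), b) ∈ K) : K = ⊤ := by
  rw [eq_top_iff, ← top_prod_top, ← hs, ← ht, prod_le_iff, map_le_iff_le_comap,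
    map_le_iff_le_comap, closure_le, closure_le]
  exact ⟨hsK, htK⟩

theorem ZMod.closure_ofAdd_one (n : ℕ) :
    Subgroup.closure {Multiplicative.ofAdd (1 : ZMod n)} = ⊤ := by
  rw [← Subgroup.zpowers_eq_closure, eq_top_iff]
  rintro x -
  obtain ⟨k, hk⟩ := ZMod.intCast_surjective x.toAdd
  exact ⟨k, by simp [← ofAdd_zsmul, hk]⟩

theorem Equiv.Perm.closure_finRotate_swap (n : ℕ) :
    Subgroup.closure {finRotate (n + 2), swap 0 1} = ⊤ := by
  simpa using closure_cycle_adjacent_swap isCycle_finRotate support_finRotate (0 : Fin (n + 2))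

/-- The group `Z₃ × S₃` admits a generating vector of type `(1 | 3)`. -/
theorem Z3xS3_generating_vector :
    ∃ l h₁ h₂ : Multiplicative (ZMod 3) × Equiv.Perm (Fin 3),
      orderOf l = 3 ∧ l * ⁅h₁, h₂⁆ = 1 ∧
      Subgroup.closure {l, h₁, h₂} = ⊤ := by
  refine ⟨(1, (finRotate 3)⁻¹), (.ofAdd 1, swap 0 1), (1, finRotate 3),
    orderOf_eq_prime (by decide) (by decide), by decide, ?_⟩
  set h₁ : Multiplicative (ZMod 3) × Perm (Fin 3) := (.ofAdd 1, swap 0 1)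
  have h₁_mem : h₁ ∈ Subgroup.closure {(1, (finRotate 3)⁻¹), h₁, (1, finRotate 3)} :=
    Subgroup.subset_closure (by simp)
  refine Subgroup.eq_top_of_inl_inr_mem (ZMod.closure_ofAdd_one 3)
    (Perm.closure_finRotate_swap 1) ?_ ?_
  · rintro a rfl
    have : h₁ ^ 4 = (.ofAdd 1, 1) := by decide
    exact this ▸ pow_mem h₁_mem 4
  · rintro b (rfl | rfl)
    · exact Subgroup.subset_closure (by simp)
    · have : h₁ ^ 3 = (1, swap 0 1) := by decide
      exact this ▸ pow_mem h₁_mem 3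
end

section
/- Let G° = ⟨x, y² ⟩ ≤ D_{2,8,5} = ⟨x, y | x² = y⁸ = 1, x y x⁻¹ = y⁵⟩. Then G° ≅ Z_2 × Z_4, G° has index 2 in D_{2,8,5}, the centralizer of x in D_{2,8,5} is contained in G°, and for every g ∈ D_{2,8,5} \ G°, g² ∈ ⟨y⟩ and g² ∉ {σ x σ⁻¹ : σ ∈ G°}. -/
/-!
Conjugation by the involution `x` maps `⟨y⟩` into itself, so `⟨y⟩` is normal and `G/⟨y⟩` is
generated by the image of `x`; hence `[G : ⟨y⟩] ≤ 2`, and `|G| = 16` forces `y` to have order 8,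
`[G : ⟨y⟩] = 2` and `x ∉ ⟨y⟩`. Since `y¹⁰ = y²`, `x` commutes with `y²`, so `G°` is the internal
direct product `⟨x⟩ × ⟨y²⟩ ≅ Z₂ × Z₄` and conjugation by `G°` fixes `x`. Squares lie in the
index-two subgroup `⟨y⟩`, which does not contain `x`. Finally, `yᵏ` commutes with `x` only if
`y⁴ᵏ = 1`, i.e. `k` is even; together with `x ∉ ⟨y⟩` this puts the centralizer of `x` inside `G°`.
-/

open Subgroup

section

variable {G : Type*} [Group G]

theorem mem_normalizer_zpowers_of_sq_eq_one {x y : G} (hx : x ^ 2 = 1)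
    (hconj : x * y * x⁻¹ ∈ zpowers y) : x ∈ normalizer (zpowers y : Set G) := by
  have conj_mem : ∀ h ∈ zpowers y, x * h * x⁻¹ ∈ zpowers y := by
    rintro _ ⟨k, rfl⟩
    simpa only [conj_zpow] using zpow_mem hconj k
  have hxinv : x⁻¹ = x := inv_eq_of_mul_eq_one_right (by rw [← sq, hx])
  refine mem_normalizer_iff.mpr fun h => ⟨conj_mem h, fun hh => ?_⟩
  have hh' : x * (x * h * x⁻¹) * x⁻¹ = h := by
    calc x * (x * h * x⁻¹) * x⁻¹ = x⁻¹ * (x * h * x⁻¹) * x := by rw [hxinv]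
      _ = h := by group
  exact hh' ▸ conj_mem _ hh

theorem index_le_two_of_closure_pair_eq_top {N : Subgroup G} [N.Normal] {x y : G}
    (hx : x ^ 2 = 1) (hy : y ∈ N) (hgen : closure {x, y} = ⊤) : N.index ≤ 2 := by
  set π := QuotientGroup.mk' N
  have hπy : π y = 1 := (QuotientGroup.eq_one_iff y).mpr hy
  have hπx : zpowers (π x) = ⊤ := by
    rw [zpowers_eq_closure, ← closure_insert_one, Set.pair_comm, ← hπy, ← Set.image_pair,
      ← MonoidHom.map_closure, hgen, ← MonoidHom.range_eq_map,
      MonoidHom.range_eq_top.mpr (QuotientGroup.mk'_surjective N)]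
  rw [index_eq_card, ← Nat.card_congr (Equiv.Set.univ _), ← coe_top, ← hπx, SetLike.coe_sort_coe,
    Nat.card_zpowers]
  exact orderOf_le_of_pow_eq_one two_pos (by rw [← map_pow, hx, map_one])

theorem disjoint_zpowers_of_sq_eq_one {x : G} {H : Subgroup G} (hx : x ^ 2 = 1) (hxH : x ∉ H) :
    Disjoint (zpowers x) H := by
  rw [disjoint_def]
  rintro _ ⟨k, rfl⟩ hk
  obtain ⟨m, rfl | rfl⟩ := Int.even_or_odd' k
  · simp only [zpow_mul, zpow_ofNat, hx, one_zpow]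
  · exact absurd (by simpa [zpow_add, zpow_mul, hx] using hk) hxH

theorem nonempty_zpowers_mulEquiv_zmod {g : G} {n : ℕ} (h : orderOf g = n) :
    Nonempty (zpowers g ≃* Multiplicative (ZMod n)) := by
  subst h
  rw [← Nat.card_zpowers]
  exact ⟨(zmodCyclicMulEquiv inferInstance).symm⟩

theorem nonempty_closure_pair_mulEquiv_prod {a b : G} (hab : Commute a b)
    (hdisj : Disjoint (zpowers a) (zpowers b)) :
    Nonempty (closure {a, b} ≃* zpowers a × zpowers b) := by
  have comm : ∀ m n, Commute ((zpowers a).subtype m) ((zpowers b).subtype n) := by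
    rintro ⟨_, i, rfl⟩ ⟨_, j, rfl⟩
    exact hab.zpow_zpow i j
  have hinj :=
    (MonoidHom.noncommCoprod_injective (zpowers a).subtype (zpowers b).subtype comm).mpr
      ⟨subtype_injective _, subtype_injective _, by simpa only [range_subtype] using hdisj⟩
  have hrange : ((zpowers a).subtype.noncommCoprod (zpowers b).subtype comm).range =
      closure {a, b} := by
    rw [MonoidHom.noncommCoprod_range, range_subtype, range_subtype, zpowers_eq_closure,
      zpowers_eq_closure, ← Subgroup.closure_union, Set.singleton_union]
  exact ⟨((MonoidHom.ofInjective hinj).trans (MulEquiv.subgroupCongr hrange)).symm⟩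

theorem centralizer_le_of_index_two {N H : Subgroup G} {x : G} (hN : N.index = 2) (hxN : x ∉ N)
    (hxH : x ∈ H) (hle : N ⊓ centralizer {x} ≤ H) : centralizer {x} ≤ H := by
  intro g hg
  by_cases hgN : g ∈ N
  · exact hle ⟨hgN, hg⟩
  · have hxg : x * g ∈ N := (mul_mem_iff_of_index_two hN).mpr (iff_of_false hxN hgN)
    have hxg' : x * g ∈ H := hle ⟨hxg, mul_mem (mem_centralizer_singleton_iff.mpr rfl) hg⟩
    simpa only [inv_mul_cancel_left] using mul_mem (inv_mem hxH) hxg'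

theorem notMem_of_closure_pair_eq_top {H : Subgroup G} {x y : G} (hH : H ≠ ⊤) (hy : y ∈ H)
    (hgen : closure {x, y} = ⊤) : x ∉ H := fun hx =>
  hH <| top_le_iff.mp <| hgen ▸
    (closure_le H).mpr (Set.insert_subset hx (Set.singleton_subset_iff.mpr hy))

section D285

variable {x y : G}

theorem zpowers_normal_of_conj_eq_pow_five (hx : x ^ 2 = 1) (hconj : x * y * x⁻¹ = y ^ 5)
    (hgen : closure {x, y} = ⊤) : (zpowers y).Normal := by
  refine normalizer_eq_top_iff.mp (top_le_iff.mp (hgen ▸ (closure_le _).mpr ?_))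
  refine Set.insert_subset ?_ (Set.singleton_subset_iff.mpr (le_normalizer (mem_zpowers y)))
  exact mem_normalizer_zpowers_of_sq_eq_one hx (hconj ▸ pow_mem (mem_zpowers y) 5)

theorem orderOf_eq_eight_and_index_zpowers_eq_two (hG : Nat.card G = 16) (hx : x ^ 2 = 1)
    (hy : y ^ 8 = 1) (hconj : x * y * x⁻¹ = y ^ 5) (hgen : closure {x, y} = ⊤) :
    orderOf y = 8 ∧ (zpowers y).index = 2 := by
  have := zpowers_normal_of_conj_eq_pow_five hx hconj hgen
  have hindex := index_le_two_of_closure_pair_eq_top hx (mem_zpowers y) hgen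
  have hcard := card_mul_index (zpowers y)
  rw [Nat.card_zpowers, hG] at hcard
  have hord := Nat.le_of_dvd (by norm_num) (orderOf_dvd_of_pow_eq_one hy)
  interval_cases (zpowers y).index <;> omega

theorem commute_sq_of_conj_eq_pow_five (hy : y ^ 8 = 1) (hconj : x * y * x⁻¹ = y ^ 5) :
    Commute x (y ^ 2) := by
  have h : x * y ^ 2 * x⁻¹ = y ^ 2 := by
    rw [← conj_pow, hconj, ← pow_mul, pow_eq_pow_mod _ hy]
  exact mul_inv_eq_iff_eq_mul.mp h

theorem zpowers_inf_centralizer_le_zpowers_sq (hy : orderOf y = 8)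
    (hconj : x * y * x⁻¹ = y ^ 5) : zpowers y ⊓ centralizer {x} ≤ zpowers (y ^ 2) := by
  rintro _ ⟨⟨k, rfl⟩, hk⟩
  have hk : x * y ^ k * x⁻¹ = y ^ k :=
    mul_inv_eq_of_eq_mul (mem_centralizer_singleton_iff.mp hk).symm
  have h4k : y ^ (4 * k) = 1 := by
    rw [show 4 * k = 5 * k - k by ring, zpow_sub, zpow_mul, zpow_ofNat, ← hconj, conj_zpow, hk,
      mul_inv_cancel]
  obtain ⟨m, rfl⟩ : (2 : ℤ) ∣ k := by
    have := orderOf_dvd_iff_zpow_eq_one.mpr h4k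
    rw [hy] at this
    omega
  exact ⟨m, by simp only [zpow_mul, zpow_ofNat]⟩

theorem closure_pair_sq_le_centralizer (hy : y ^ 8 = 1) (hconj : x * y * x⁻¹ = y ^ 5) :
    closure {x, y ^ 2} ≤ centralizer {x} :=
  (closure_le _).mpr <| Set.insert_subset (mem_centralizer_singleton_iff.mpr rfl) <|
    Set.singleton_subset_iff.mpr <| mem_centralizer_singleton_iff.mpr
      (commute_sq_of_conj_eq_pow_five hy hconj).symm.eq

theorem nonempty_closure_mulEquiv_zmod_two_prod_zmod_four (hx : x ^ 2 = 1) (hy : y ^ 8 = 1)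
    (hconj : x * y * x⁻¹ = y ^ 5) (hy8 : orderOf y = 8) (hxN : x ∉ zpowers y) :
    Nonempty (closure {x, y ^ 2} ≃* Multiplicative (ZMod 2 × ZMod 4)) := by
  have hx2 : orderOf x = 2 := orderOf_eq_prime hx fun h => hxN (h ▸ one_mem _)
  have hy4 : orderOf (y ^ 2) = 4 := by
    rw [orderOf_pow_of_dvd two_ne_zero (by rw [hy8]; norm_num), hy8]
  have hdisj : Disjoint (zpowers x) (zpowers (y ^ 2)) :=
    disjoint_zpowers_of_sq_eq_one hx fun h => hxN (zpowers_le.mpr (pow_mem (mem_zpowers y) 2) h)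
  obtain ⟨e⟩ :=
    nonempty_closure_pair_mulEquiv_prod (commute_sq_of_conj_eq_pow_five hy hconj) hdisj
  obtain ⟨e₁⟩ := nonempty_zpowers_mulEquiv_zmod hx2
  obtain ⟨e₂⟩ := nonempty_zpowers_mulEquiv_zmod hy4
  exact ⟨e.trans ((e₁.prodCongr e₂).trans (MulEquiv.prodMultiplicative _ _).symm)⟩

end D285

end

/-- In `D_{2,8,5} = ⟨x, y | x² = y⁸ = 1, xyx⁻¹ = y⁵⟩` of order 16, the subgroup
`G° = ⟨x, y²⟩` is isomorphic to `Z₂ × Z₄`, has index 2, contains the centralizer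
of `x`, and every `g ∉ G°` satisfies `g² ∈ ⟨y⟩` with `g²` not conjugate in `G°` to `x`. -/
theorem D285_mixed_conditions {G : Type*} [Group G] (hG : Nat.card G = 16)
    (x y : G) (hx : x ^ 2 = 1) (hy : y ^ 8 = 1) (hconj : x * y * x⁻¹ = y ^ 5)
    (hgen : Subgroup.closure {x, y} = ⊤) :
    Nonempty (↥(Subgroup.closure {x, y ^ 2}) ≃* Multiplicative (ZMod 2 × ZMod 4)) ∧
    (Subgroup.closure {x, y ^ 2} : Subgroup G).index = 2 ∧
    Subgroup.centralizer {x} ≤ Subgroup.closure {x, y ^ 2} ∧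
    (∀ g : G, g ∉ Subgroup.closure {x, y ^ 2} →
      g ^ 2 ∈ Subgroup.zpowers y ∧
      ∀ σ ∈ Subgroup.closure {x, y ^ 2}, g ^ 2 ≠ σ * x * σ⁻¹) := by
  obtain ⟨hy8, hindex⟩ := orderOf_eq_eight_and_index_zpowers_eq_two hG hx hy hconj hgen
  have hxN : x ∉ zpowers y :=
    notMem_of_closure_pair_eq_top (fun h => by simp [h] at hindex) (mem_zpowers y) hgen
  have hx_mem : x ∈ closure {x, y ^ 2} := subset_closure (Set.mem_insert _ _)
  have hy2_le : zpowers (y ^ 2) ≤ closure {x, y ^ 2} :=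
    zpowers_le.mpr (subset_closure (Set.mem_insert_of_mem _ rfl))
  obtain ⟨e⟩ := nonempty_closure_mulEquiv_zmod_two_prod_zmod_four hx hy hconj hy8 hxN
  have hcard : Nat.card (closure {x, y ^ 2}) = 8 := by
    rw [Nat.card_congr e.toEquiv, Nat.card_congr Multiplicative.toAdd, Nat.card_prod,
      Nat.card_zmod, Nat.card_zmod]
  refine ⟨⟨e⟩, ?_, centralizer_le_of_index_two hindex hxN hx_mem
    ((zpowers_inf_centralizer_le_zpowers_sq hy8 hconj).trans hy2_le),
    fun g _ => ⟨sq_mem_of_index_two hindex g, fun σ hσ hg => hxN ?_⟩⟩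
  · have := card_mul_index (closure {x, y ^ 2})
    rw [hcard, hG] at this
    omega
  · have hσx : σ * x * σ⁻¹ = x := mul_inv_eq_of_eq_mul <|
      mem_centralizer_singleton_iff.mp (closure_pair_sq_le_centralizer hy hconj hσ)
    rw [← hσx, ← hg]
    exact sq_mem_of_index_two hindex g
end
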